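/- arXiv:2603.16771 — 5 statements merged into one kernel-verified Lean document; each statement's English description precedes it below -/
import Mathlib

section
/- Let (B, +, ∘) be a skew left brace and x ∈ B an element not in the annihilator Ann(B). Then the brace centralizer Cb_B(x) = {b ∈ B : x * b = 1, [x, b]^∘ = 1, [x, b]^+ = 1} is a proper subgroup of the group (B, ∘). -/
/-- A skew left brace structure on a type carrying both an additive and a
multiplicative group structure: the compatibility (skew left distributivity)
`a ∘ (b + c) = (a ∘ b) - a + (a ∘ c)` holds, and the two identities coincide. -/
class SkewBrace (B : Type*) [AddGroup B] [Group B] : Prop where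
  compat : ∀ a b c : B, a * (b + c) = a * b + -a + a * c
  zero_eq_one : (0 : B) = 1

section Defs

variable {B : Type*} [AddGroup B] [Group B]

/-- `λ_a(b) = -a + (a ∘ b)`. -/
def lambdaMap (a b : B) : B := -a + a * b

/-- `a * b := -a + (a ∘ b) - b` (the star product of a skew brace). -/
def starOp (a b : B) : B := -a + a * b + -b

/-- The additive commutator `[a,b]⁺ = a + b - a - b`. -/
def addComB (a b : B) : B := a + b + -a + -b

/-- The multiplicative commutator `[a,b]∘ = a ∘ b ∘ a⁻¹ ∘ b⁻¹`. -/
def mulComB (a b : B) : B := a * b * a⁻¹ * b⁻¹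

/-- The brace centralizer `Cb_B(x) = {b | x*b = b*x = [x,b]⁺ = 1}`. -/
def Cb (x : B) : Set B := {b | starOp x b = 0 ∧ starOp b x = 0 ∧ addComB x b = 0}

/-- The annihilator `Ann(B) = Ker λ ∩ Z(B,+) ∩ Z(B,∘)` as a set. -/
def AnnSet (B : Type*) [AddGroup B] [Group B] : Set B :=
  {a | (∀ b : B, a + b = a * b) ∧ (∀ b : B, a + b = b + a) ∧ (∀ b : B, a * b = b * a)}

/-- A sub-skew brace: a subset closed under both group operations and inverses. -/
def IsSubSkewBrace (H : Set B) : Prop :=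
  (0 : B) ∈ H ∧ (∀ a ∈ H, ∀ b ∈ H, a + b ∈ H) ∧ (∀ a ∈ H, -a ∈ H) ∧
    (∀ a ∈ H, ∀ b ∈ H, a * b ∈ H) ∧ (∀ a ∈ H, a⁻¹ ∈ H)

/-- The commuting probability of a (finite) skew brace. -/
noncomputable def Pb (B : Type*) [AddGroup B] [Group B] : ℚ :=
  (Nat.card {p : B × B //
      starOp p.1 p.2 = 0 ∧ starOp p.2 p.1 = 0 ∧ addComB p.1 p.2 = 0} : ℚ)
    / (Nat.card B : ℚ) ^ 2

/-- The commuting probability of a sub-skew brace `H` of `B`. -/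
noncomputable def PbSub (H : Set B) : ℚ :=
  (Nat.card {p : B × B // p.1 ∈ H ∧ p.2 ∈ H ∧
      starOp p.1 p.2 = 0 ∧ starOp p.2 p.1 = 0 ∧ addComB p.1 p.2 = 0} : ℚ)
    / (Nat.card H : ℚ) ^ 2

end Defs


section Helpers
variable {B : Type*} [AddGroup B] [Group B] [SkewBrace B]

set_option linter.unusedSectionVars false

lemma lam_add (a b c : B) : lambdaMap a (b + c) = lambdaMap a b + lambdaMap a c := by
  simp only [lambdaMap, SkewBrace.compat, add_assoc]

lemma lam_zero (a : B) : lambdaMap a (0 : B) = 0 := by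
  have h := lam_add a 0 0
  rw [add_zero] at h
  exact left_eq_add.mp h

lemma lam_neg (a b : B) : lambdaMap a (-b) = -lambdaMap a b := by
  have h := lam_add a b (-b)
  rw [add_neg_cancel, lam_zero] at h
  exact (neg_eq_of_add_eq_zero_right h.symm).symm

lemma lam_one (c : B) : lambdaMap (1 : B) c = c := by
  rw [lambdaMap, one_mul, ← SkewBrace.zero_eq_one, neg_zero, zero_add]

lemma lam_mul (a b c : B) : lambdaMap (a * b) c = lambdaMap a (lambdaMap b c) := by
  have h : lambdaMap b c = -b + b * c := rfl
  rw [h, lam_add, lam_neg]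
  simp only [lambdaMap, mul_assoc, neg_add_rev, add_assoc, neg_add_cancel_left]

lemma lam_self_inv (b : B) : lambdaMap b b⁻¹ = -b := by
  rw [lambdaMap, mul_inv_cancel, ← SkewBrace.zero_eq_one, add_zero]

lemma lam_cancel (b c : B) : lambdaMap b⁻¹ (lambdaMap b c) = c := by
  rw [← lam_mul, inv_mul_cancel, lam_one]

lemma star_eq_zero_iff {a b : B} : starOp a b = 0 ↔ lambdaMap a b = b := by
  show lambdaMap a b + -b = 0 ↔ _
  rw [add_neg_eq_zero]

lemma star_eq_zero_iff_mul {a b : B} : starOp a b = 0 ↔ a * b = a + b := by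
  rw [star_eq_zero_iff, lambdaMap]
  constructor
  · intro h
    conv_rhs => rw [← h]
    rw [add_neg_cancel_left]
  · intro h; rw [h, neg_add_cancel_left]

lemma mulComB_eq_one_iff {a b : B} : mulComB a b = 1 ↔ a * b = b * a := by
  rw [mulComB, mul_inv_eq_one, mul_inv_eq_iff_eq_mul]

lemma addComB_eq_zero_iff {a b : B} : addComB a b = 0 ↔ a + b = b + a := by
  rw [addComB, add_neg_eq_zero, add_neg_eq_iff_eq_add]

@[to_additive] lemma comm_inv' {G : Type*} [Group G] {a b : G} (h : a * b = b * a) :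
    a * b⁻¹ = b⁻¹ * a := by
  rw [mul_inv_eq_iff_eq_mul, mul_assoc, h, ← mul_assoc, inv_mul_cancel, one_mul]

end Helpers

/-- If `x` is not in the annihilator, then the brace centralizer of `x` is a
proper subgroup of the multiplicative group. -/
theorem stmt1 {B : Type*} [AddGroup B] [Group B] [SkewBrace B] (x : B)
    (hx : x ∉ AnnSet B) :
    ∃ H : Subgroup B,
      (H : Set B) = {b : B | starOp x b = 0 ∧ mulComB x b = 1 ∧ addComB x b = 0} ∧
      H ≠ ⊤ := by
  refine ⟨⟨⟨⟨{b : B | starOp x b = 0 ∧ mulComB x b = 1 ∧ addComB x b = 0}, ?_⟩, ?_⟩, ?_⟩,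
    rfl, ?_⟩
  -- one_mem' comes second in this constructor order; handle mul_mem' first
  pick_goal 2
  · refine ⟨?_, ?_, ?_⟩
    · rw [star_eq_zero_iff, ← SkewBrace.zero_eq_one, lam_zero]
    · rw [mulComB_eq_one_iff, mul_one, one_mul]
    · rw [addComB_eq_zero_iff, ← SkewBrace.zero_eq_one, add_zero, zero_add]
  · rintro b c ⟨hb1, hb2, hb3⟩ ⟨hc1, hc2, hc3⟩
    refine ⟨?_, ?_, ?_⟩
    · rw [star_eq_zero_iff] at hb1 hc1 ⊢
      have hcomm := mulComB_eq_one_iff.mp hb2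
      have hkey : lambdaMap x (lambdaMap b c) = lambdaMap b c := by
        rw [← lam_mul, hcomm, lam_mul, hc1]
      have hbc : b * c = b + lambdaMap b c := by rw [lambdaMap, add_neg_cancel_left]
      rw [hbc, lam_add, hb1, hkey]
    · rw [mulComB_eq_one_iff] at hb2 hc2 ⊢
      rw [← mul_assoc, hb2, mul_assoc, hc2, ← mul_assoc]
    · rw [addComB_eq_zero_iff] at hb3 hc3 ⊢
      have hxb := star_eq_zero_iff_mul.mp hb1
      have hbx : lambdaMap b x = x := by
        rw [lambdaMap, ← mulComB_eq_one_iff.mp hb2, hxb, hb3, neg_add_cancel_left]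
      have hbc : b * c = b + lambdaMap b c := by rw [lambdaMap, add_neg_cancel_left]
      have hxl : x + lambdaMap b c = lambdaMap b c + x := by
        rw [← hbx, ← lam_add, ← lam_add, hc3]
      calc x + b * c = x + b + lambdaMap b c := by rw [hbc, add_assoc]
        _ = b + x + lambdaMap b c := by rw [hb3]
        _ = b + lambdaMap b c + x := by rw [add_assoc, hxl, ← add_assoc]
        _ = b * c + x := by rw [hbc]
  · rintro b ⟨hb1, hb2, hb3⟩
    refine ⟨?_, ?_, ?_⟩
    · rw [star_eq_zero_iff] at hb1 ⊢
      have hcomm := mulComB_eq_one_iff.mp hb2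
      have key : lambdaMap b (lambdaMap x b⁻¹) = lambdaMap b b⁻¹ := by
        rw [← lam_mul, ← hcomm, lam_mul, lam_self_inv, lam_neg, hb1]
      have h2 := congrArg (lambdaMap b⁻¹) key
      rwa [lam_cancel, lam_cancel] at h2
    · rw [mulComB_eq_one_iff] at hb2 ⊢
      exact comm_inv' hb2
    · rw [addComB_eq_zero_iff] at hb3 ⊢
      have hxb := star_eq_zero_iff_mul.mp hb1
      have hbx : lambdaMap b x = x := by
        rw [lambdaMap, ← mulComB_eq_one_iff.mp hb2, hxb, hb3, neg_add_cancel_left]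
      have hbix : lambdaMap b⁻¹ x = x := by
        conv_lhs => rw [← hbx]
        rw [lam_cancel]
      have hu : x + lambdaMap b⁻¹ b = lambdaMap b⁻¹ b + x := by
        rw [← hbix, ← lam_add, ← lam_add, hb3]
      have hbinv : b⁻¹ = -lambdaMap b⁻¹ b := by
        rw [← lam_neg, ← lam_self_inv b, lam_cancel]
      rw [hbinv]
      exact comm_neg' hu
  · intro h
    apply hx
    have hall : ∀ b : B, starOp x b = 0 ∧ mulComB x b = 1 ∧ addComB x b = 0 := by
      intro b
      have hb : b ∈ (⊤ : Subgroup B) := trivial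
      rw [← h] at hb
      exact hb
    refine ⟨fun b => ?_, fun b => addComB_eq_zero_iff.mp (hall b).2.2,
      fun b => mulComB_eq_one_iff.mp (hall b).2.1⟩
    exact (star_eq_zero_iff_mul.mp (hall b).1).symm
end

section
/- Let (B, +, ∘) be a skew left brace and a, x₁, x₂ ∈ B with a ∈ Cb_B(x₁) ∩ Cb_B(x₂). Then a ∈ Cb_B(x₁ ∘ x₂); consequently Cb_B(x₁) ∩ Cb_B(x₂) ⊆ Cb_B(x₁ ∘ x₂). -/
/-- Membership in two brace centralizers implies membership in the brace
centralizer of the product; consequently the intersection is contained in it. -/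
theorem stmt3 {B : Type*} [AddGroup B] [Group B] [SkewBrace B] :
    (∀ a x₁ x₂ : B, a ∈ Cb x₁ → a ∈ Cb x₂ → a ∈ Cb (x₁ * x₂)) ∧
    (∀ x₁ x₂ : B, Cb x₁ ∩ Cb x₂ ⊆ Cb (x₁ * x₂)) := by
  have key : ∀ a x₁ x₂ : B, a ∈ Cb x₁ → a ∈ Cb x₂ → a ∈ Cb (x₁ * x₂) := by
    intro a x₁ x₂ h k
    obtain ⟨h1, h2, h3⟩ := h
    obtain ⟨k1, k2, k3⟩ := k
    simp only [starOp, addComB, Set.mem_setOf_eq] at *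
    have e1 : x₁ * a = x₁ + a := by
      have := congrArg (fun t => x₁ + t + a) h1
      simpa [add_assoc] using this
    have e2 : a * x₁ = a + x₁ := by
      have := congrArg (fun t => a + t + x₁) h2
      simpa [add_assoc] using this
    have e3 : x₁ + a = a + x₁ := by
      have := congrArg (fun t => t + a + x₁) h3
      simpa [add_assoc] using this
    have f1 : x₂ * a = x₂ + a := by
      have := congrArg (fun t => x₂ + t + a) k1
      simpa [add_assoc] using this
    have f2 : a * x₂ = a + x₂ := by
      have := congrArg (fun t => a + t + x₂) k2
      simpa [add_assoc] using this
    have f3 : x₂ + a = a + x₂ := by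
      have := congrArg (fun t => t + a + x₂) k3
      simpa [add_assoc] using this
    have comm1 : x₁ * a = a * x₁ := by rw [e1, e2, e3]
    have comm2 : x₂ * a = a * x₂ := by rw [f1, f2, f3]
    have g1 : x₁ * x₂ * a = x₁ * x₂ + a := by
      calc x₁ * x₂ * a = x₁ * (x₂ + a) := by rw [mul_assoc, f1]
        _ = x₁ * x₂ + -x₁ + x₁ * a := SkewBrace.compat ..
        _ = x₁ * x₂ + a := by rw [e1]; simp [add_assoc]
    have g2 : a * (x₁ * x₂) = a + x₁ * x₂ := by
      calc a * (x₁ * x₂) = x₁ * (a * x₂) := by rw [← mul_assoc, ← comm1, mul_assoc]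
        _ = x₁ * (a + x₂) := by rw [f2]
        _ = x₁ * a + -x₁ + x₁ * x₂ := SkewBrace.compat ..
        _ = a + x₁ * x₂ := by rw [e1, e3]; simp [add_assoc]
    have mcomm : a * (x₁ * x₂) = x₁ * x₂ * a := by
      rw [← mul_assoc, ← comm1, mul_assoc, ← comm2, ← mul_assoc]
    have g3 : x₁ * x₂ + a = a + x₁ * x₂ := by rw [← g1, ← g2, mcomm]
    refine ⟨?_, ?_, ?_⟩
    · show -(x₁ * x₂) + x₁ * x₂ * a + -a = 0
      rw [g1]; simp [add_assoc]
    · show -a + a * (x₁ * x₂) + -(x₁ * x₂) = 0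
      rw [g2]; simp [add_assoc]
    · show x₁ * x₂ + a + -(x₁ * x₂) + -a = 0
      rw [g3]; simp [add_assoc]
  exact ⟨key, fun x₁ x₂ a ⟨h, k⟩ => key a x₁ x₂ h k⟩
end

section
/- Let (B, +, ∘) be a skew left brace. Then the set FCI(B) of all elements x ∈ B whose brace centralizer Cb_B(x) has finite index in the group (B, ∘) is a subgroup of (B, ∘). -/
/-- The set of elements whose brace centralizer has finite index in the
multiplicative group. -/
def FCISet (B : Type*) [AddGroup B] [Group B] : Set B :=
  {x : B | ∃ H : Subgroup B, (H : Set B) = Cb x ∧ H.FiniteIndex}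

namespace SBAux

variable {B : Type*} [AddGroup B] [Group B] [SkewBrace B]

lemma lam_add (a b c : B) : lambdaMap a (b + c) = lambdaMap a b + lambdaMap a c := by
  simp [lambdaMap, SkewBrace.compat, add_assoc]

lemma lam_zero (a : B) : lambdaMap a 0 = 0 := by
  simp [lambdaMap, SkewBrace.zero_eq_one]

lemma lam_neg (a b : B) : lambdaMap a (-b) = -lambdaMap a b := by
  have h := lam_add a b (-b)
  rw [add_neg_cancel, lam_zero] at h
  exact eq_neg_of_add_eq_zero_right h.symm

lemma lam_mul (a b c : B) : lambdaMap (a * b) c = lambdaMap a (lambdaMap b c) := by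
  have h : lambdaMap b c = -b + b * c := rfl
  rw [h, lam_add, lam_neg]
  simp [lambdaMap, mul_assoc, add_assoc]

lemma lam_one (c : B) : lambdaMap 1 c = c := by
  have h : (-1 : B) = 0 := by rw [← SkewBrace.zero_eq_one, neg_zero]
  simp [lambdaMap, h]

lemma lam_inj (a : B) : Function.Injective (lambdaMap a : B → B) := by
  intro x y h
  have h2 := congrArg (lambdaMap a⁻¹) h
  rwa [← lam_mul, ← lam_mul, inv_mul_cancel, lam_one, lam_one] at h2

lemma mul_eq_add_lam (a b : B) : a * b = a + lambdaMap a b := by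
  simp [lambdaMap, ← add_assoc]

lemma lam_self_inv (b : B) : lambdaMap b b⁻¹ = -b := by
  have h : b + lambdaMap b b⁻¹ = 0 := by
    rw [← mul_eq_add_lam, mul_inv_cancel, ← SkewBrace.zero_eq_one]
  exact eq_neg_of_add_eq_zero_right h

lemma lam_inv_self (b : B) : lambdaMap b⁻¹ b = -b⁻¹ := by
  have h : b⁻¹ + lambdaMap b⁻¹ b = 0 := by
    rw [← mul_eq_add_lam, inv_mul_cancel, ← SkewBrace.zero_eq_one]
  exact eq_neg_of_add_eq_zero_right h

omit [SkewBrace B] in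
lemma neg_comm_of_comm {x y : B} (h : x + y = y + x) : -y + x = x + -y := by
  have h2 : -y + (x + y) + -y = -y + (y + x) + -y := by rw [h]
  simpa [add_assoc] using h2

lemma mem_Cb_iff {z b : B} :
    b ∈ Cb z ↔ lambdaMap z b = b ∧ lambdaMap b z = z ∧ z + b = b + z := by
  have h1 : starOp z b = 0 ↔ lambdaMap z b = b := by
    show lambdaMap z b + -b = 0 ↔ _
    exact add_neg_eq_zero
  have h2 : starOp b z = 0 ↔ lambdaMap b z = z := by
    show lambdaMap b z + -z = 0 ↔ _
    exact add_neg_eq_zero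
  have h3 : addComB z b = 0 ↔ z + b = b + z := by
    show z + b + -z + -b = 0 ↔ _
    rw [add_neg_eq_zero]
    constructor
    · intro h
      have := congrArg (· + z) h
      simpa [add_assoc] using this
    · intro h
      rw [h]
      simp [add_assoc]
  exact and_congr h1 (and_congr h2 h3)

lemma Cb_comm {z b : B} : b ∈ Cb z ↔ z ∈ Cb b := by
  rw [mem_Cb_iff, mem_Cb_iff]
  constructor <;> rintro ⟨u, v, w⟩ <;> exact ⟨v, u, w.symm⟩

lemma mul_comm_of_mem {z b : B} (hb : b ∈ Cb z) : z * b = b * z := by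
  obtain ⟨h1, h2, h3⟩ := mem_Cb_iff.mp hb
  rw [mul_eq_add_lam, mul_eq_add_lam, h1, h2, h3]

/-- The brace centralizer as a subgroup of the multiplicative group. -/
def CbSub (z : B) : Subgroup B where
  carrier := Cb z
  one_mem' := by
    rw [mem_Cb_iff]
    refine ⟨?_, lam_one z, ?_⟩
    · rw [← SkewBrace.zero_eq_one, lam_zero]
    · rw [← SkewBrace.zero_eq_one, add_zero, zero_add]
  mul_mem' := by
    intro b c hb hc
    obtain ⟨hb1, hb2, hb3⟩ := mem_Cb_iff.mp hb
    obtain ⟨hc1, hc2, hc3⟩ := mem_Cb_iff.mp hc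
    have hzb : z * b = b * z := mul_comm_of_mem hb
    rw [mem_Cb_iff]
    refine ⟨?_, ?_, ?_⟩
    · rw [mul_eq_add_lam b c, lam_add, hb1, ← lam_mul, hzb, lam_mul, hc1,
        ← mul_eq_add_lam]
    · rw [lam_mul, hc2, hb2]
    · -- z + b * c = b * c + z
      have hw : z + lambdaMap b c = lambdaMap b c + z := by
        have e1 : lambdaMap b (z + c) = z + lambdaMap b c := by
          rw [lam_add, hb2]
        have e2 : lambdaMap b (c + z) = lambdaMap b c + z := by
          rw [lam_add, hb2]
        rw [← e1, ← e2, hc3]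
      rw [mul_eq_add_lam b c, ← add_assoc, hb3, add_assoc, hw, ← add_assoc]
  inv_mem' := by
    intro b hb
    obtain ⟨hb1, hb2, hb3⟩ := mem_Cb_iff.mp hb
    have hzb : z * b = b * z := mul_comm_of_mem hb
    rw [mem_Cb_iff]
    have k1 : lambdaMap z b⁻¹ = b⁻¹ := by
      apply lam_inj b
      rw [← lam_mul, ← hzb, lam_mul, lam_self_inv, lam_neg, hb1]
    have k2 : lambdaMap b⁻¹ z = z := by
      apply lam_inj b
      rw [← lam_mul, mul_inv_cancel, lam_one, hb2]
    refine ⟨k1, k2, ?_⟩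
    -- z + b⁻¹ = b⁻¹ + z
    have hw : z + lambdaMap b⁻¹ b = lambdaMap b⁻¹ b + z := by
      have e1 : lambdaMap b⁻¹ (z + b) = z + lambdaMap b⁻¹ b := by
        rw [lam_add, k2]
      have e2 : lambdaMap b⁻¹ (b + z) = lambdaMap b⁻¹ b + z := by
        rw [lam_add, k2]
      rw [← e1, ← e2, hb3]
    rw [lam_inv_self] at hw
    have h4 := neg_comm_of_comm hw
    simpa using h4.symm

lemma Cb_inv (x : B) : Cb x⁻¹ = Cb x := by
  ext b
  constructor
  · intro h
    have hx : x⁻¹ ∈ CbSub b := Cb_comm.mp h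
    have := (CbSub b).inv_mem hx
    rw [inv_inv] at this
    exact Cb_comm.mpr this
  · intro h
    exact Cb_comm.mpr ((CbSub b).inv_mem (Cb_comm.mp h))

end SBAux

open SBAux in
/-- `FCI(B)` is a subgroup of the multiplicative group. -/
theorem stmt4 {B : Type*} [AddGroup B] [Group B] [SkewBrace B] :
    ∃ K : Subgroup B, (K : Set B) = FCISet B := by
  refine ⟨{ carrier := FCISet B
            one_mem' := ?one
            mul_mem' := ?mul
            inv_mem' := ?inv }, rfl⟩
  case one =>
    refine ⟨⊤, ?_, Subgroup.instFiniteIndexTop⟩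
    ext b
    simp only [Subgroup.coe_top, Set.mem_univ, true_iff]
    exact Cb_comm.mpr (CbSub b).one_mem
  case mul =>
    intro x y hx hy
    obtain ⟨Hx, hx1, hx2⟩ := hx
    obtain ⟨Hy, hy1, hy2⟩ := hy
    haveI := hx2; haveI := hy2
    have hle : Hx ⊓ Hy ≤ CbSub (x * y) := by
      rintro b ⟨hbx, hby⟩
      have h1 : b ∈ Cb x := hx1 ▸ hbx
      have h2 : b ∈ Cb y := hy1 ▸ hby
      exact Cb_comm.mpr ((CbSub b).mul_mem (Cb_comm.mp h1) (Cb_comm.mp h2))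
    exact ⟨CbSub (x * y), rfl, Subgroup.finiteIndex_of_le hle⟩
  case inv =>
    intro x hx
    obtain ⟨H, h1, h2⟩ := hx
    exact ⟨H, by rw [h1, Cb_inv], h2⟩
end

section
/- Let B be a finite skew left brace. Then exactly one of the following holds: Pb(B) = 1, Pb(B) = 3/4, or Pb(B) ≤ 5/8. In particular, no finite skew left brace has commuting probability in the open interval (5/8, 1) except 3/4. -/
namespace SBP


lemma count_pairs {B : Type*} (P : B → B → Prop) [Fintype B] :
    Nat.card {p : B × B // P p.1 p.2} = ∑ a : B, Nat.card {b // P a b} := by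
  classical
  rw [Nat.card_congr (Equiv.subtypeProdEquivSigmaSubtype P), Nat.card_eq_fintype_card,
    Fintype.card_sigma]
  simp [Nat.card_eq_fintype_card]

lemma half_of_dvd {a n : ℕ} (hpos : 0 < a) (hn : 0 < n) (hdvd : a ∣ n) (hne : a ≠ n) :
    2 * a ≤ n := by
  obtain ⟨m, rfl⟩ := hdvd
  have hm : 2 ≤ m := by
    rcases m with - | m
    · omega
    · rcases m with - | m
      · simp at hne
      · omega
  calc 2 * a = a * 2 := by ring
    _ ≤ a * m := Nat.mul_le_mul_left _ hm

/-- A proper subgroup has at most half the cardinality. -/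
lemma half_card {G : Type*} [Group G] [Finite G] {H : Subgroup G} (h : H ≠ ⊤) :
    2 * Nat.card H ≤ Nat.card G :=
  half_of_dvd Nat.card_pos Nat.card_pos H.card_subgroup_dvd_card
    (fun hc => h (H.eq_top_of_card_eq hc))

lemma half_card_add {G : Type*} [AddGroup G] [Finite G] {H : AddSubgroup G} (h : H ≠ ⊤) :
    2 * Nat.card H ≤ Nat.card G :=
  half_of_dvd Nat.card_pos Nat.card_pos H.card_addSubgroup_dvd_card
    (fun hc => h (H.eq_top_of_card_eq hc))

lemma group58 (G : Type*) [Group G] [Finite G] (h : ¬ ∀ a b : G, a * b = b * a) :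
    8 * Nat.card {p : G × G // p.1 * p.2 = p.2 * p.1} ≤ 5 * Nat.card G ^ 2 := by
  classical
  have _inst := Fintype.ofFinite G
  set Z := Subgroup.center G with hZdef
  set n := Nat.card G with hn
  have hnpos : 0 < n := Nat.card_pos
  have hidx : 4 ≤ Z.index := by
    by_contra hlt
    push_neg at hlt
    have h0 : Z.index ≠ 0 := Subgroup.index_ne_zero_of_finite
    have hcyc : IsCyclic (G ⧸ Z) := by
      interval_cases hi : Z.index
      · exact absurd rfl h0
      · have : Nat.card (G ⧸ Z) = 1 := by rw [← Subgroup.index_eq_card, hi]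
        have := Nat.card_eq_one_iff_unique.mp this
        exact @isCyclic_of_subsingleton _ _ this.1
      · have : Fact (Nat.Prime 2) := ⟨Nat.prime_two⟩
        exact isCyclic_of_prime_card (p := 2) (by rw [← Subgroup.index_eq_card, hi])
      · have : Fact (Nat.Prime 3) := ⟨Nat.prime_three⟩
        exact isCyclic_of_prime_card (p := 3) (by rw [← Subgroup.index_eq_card, hi])
    exact h (commutative_of_cyclic_center_quotient (QuotientGroup.mk' Z)
      (by rw [QuotientGroup.ker_mk']))
  have hZn : 4 * Nat.card Z ≤ n := by
    calc 4 * Nat.card Z ≤ Z.index * Nat.card Z := Nat.mul_le_mul_right _ hidx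
      _ = n := Z.index_mul_card
  have hf_le : ∀ a : G, Nat.card {b // a * b = b * a} ≤ n := by
    intro a
    rw [hn]
    exact Nat.card_le_card_of_injective (fun x => x.1) (fun x y hxy => Subtype.ext hxy)
  have hf_half : ∀ a : G, a ∉ Z → 2 * Nat.card {b // a * b = b * a} ≤ n := by
    intro a ha
    have hC : Nat.card {b // a * b = b * a} = Nat.card (Subgroup.centralizer {a}) := by
      apply Nat.card_congr
      exact Equiv.subtypeEquivRight fun b =>
        eq_comm.trans Subgroup.mem_centralizer_singleton_iff.symm
    rw [hC]
    apply half_card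
    intro htop
    apply ha
    rw [Subgroup.mem_center_iff]
    intro g
    have : g ∈ Subgroup.centralizer {a} := htop ▸ Subgroup.mem_top g
    exact Subgroup.mem_centralizer_singleton_iff.mp this
  rw [count_pairs (fun a b : G => a * b = b * a)]
  have hsplit := Finset.sum_filter_add_sum_filter_not Finset.univ (fun a => a ∈ Z)
    (fun a => Nat.card {b // a * b = b * a})
  set S1 := ∑ a ∈ Finset.univ.filter (fun a => a ∈ Z), Nat.card {b // a * b = b * a} with hS1
  set S2 := ∑ a ∈ Finset.univ.filter (fun a => ¬ a ∈ Z), Nat.card {b // a * b = b * a} with hS2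
  have hcards : (Finset.univ.filter (fun a => a ∈ Z)).card = Nat.card Z := by
    rw [Nat.card_eq_fintype_card, Fintype.card_subtype]
  have hcards2 : (Finset.univ.filter (fun a => ¬ a ∈ Z)).card = n - Nat.card Z := by
    have := Finset.card_filter_add_card_filter_not (s := Finset.univ)
      (p := fun a => a ∈ Z)
    rw [hcards] at this
    rw [Finset.card_univ, ← Nat.card_eq_fintype_card, ← hn] at this
    omega
  have hb1 : S1 ≤ Nat.card Z * n := by
    rw [← hcards]
    have := Finset.sum_le_card_nsmul (Finset.univ.filter (fun a => a ∈ Z))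
      (fun a => Nat.card {b // a * b = b * a}) n (fun a _ => hf_le a)
    rw [smul_eq_mul] at this
    exact this
  have hb2 : 2 * S2 ≤ (n - Nat.card Z) * n := by
    rw [← hcards2, hS2, Finset.mul_sum]
    have := Finset.sum_le_card_nsmul (Finset.univ.filter (fun a => ¬ a ∈ Z))
      (fun a => 2 * Nat.card {b // a * b = b * a}) n
      (fun a ha => hf_half a (by simpa using (Finset.mem_filter.mp ha).2))
    rw [smul_eq_mul] at this
    exact this
  have hZle : Nat.card Z ≤ n := by omega
  rw [← hsplit]
  have e1 : (n - Nat.card Z) * n + Nat.card Z * n = n * n := by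
    rw [← Nat.add_mul]
    congr 1
    omega
  nlinarith [hb1, hb2, hZn, hnpos]



variable {B : Type*} [AddGroup B] [Group B] [SkewBrace B]

lemma zeo : (0 : B) = 1 := SkewBrace.zero_eq_one
lemma mulz (a : B) : a * (0 : B) = a := by rw [zeo, mul_one]
lemma compat' (a b c : B) : a * (b + c) = a * b + -a + a * c := SkewBrace.compat a b c

private lemma solve3 {G : Type*} [AddGroup G] {c p q r : G} (h : c = p + q + r) :
    r = -q + (-p + c) := by
  rw [h]; simp [add_assoc]

lemma muln (a b : B) : a * (-b) = a + (-(a * b) + a) := by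
  have h := compat' a b (-b)
  rw [add_neg_cancel, mulz] at h
  have h3 := solve3 h
  rwa [neg_neg] at h3

lemma lambda_mul (x y b : B) :
    -(x * y) + (x * y) * b = -x + x * (-y + y * b) := by
  rw [compat' x (-y) (y * b), muln, mul_assoc]
  simp [add_assoc]

lemma lambda_add (a b c : B) :
    -a + a * (b + c) = (-a + a * b) + (-a + a * c) := by
  rw [compat' a b c]; simp [add_assoc]

def Sgrp (a : B) : AddSubgroup B where
  carrier := {b | a * b = a + b}
  zero_mem' := by simp [mulz]
  add_mem' := by
    intro b c hb hc
    simp only [Set.mem_setOf_eq] at *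
    rw [compat', hb, hc]
    simp [add_assoc]
  neg_mem' := by
    intro b hb
    simp only [Set.mem_setOf_eq] at *
    rw [muln, hb]
    simp [add_assoc]

@[simp] lemma mem_Sgrp {a b : B} : b ∈ Sgrp a ↔ a * b = a + b := Iff.rfl

def Kgrp (B : Type*) [AddGroup B] [Group B] [SkewBrace B] : Subgroup B where
  carrier := {a | ∀ b, a * b = a + b}
  one_mem' := by intro b; rw [one_mul, ← zeo, zero_add]
  mul_mem' := by
    intro x y hx hy b
    simp only [Set.mem_setOf_eq] at hx hy
    rw [mul_assoc, hx, hy, hx, add_assoc]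
  inv_mem' := by
    intro x hx
    simp only [Set.mem_setOf_eq] at hx ⊢
    have hxinv : x⁻¹ = -x := by
      have h := hx x⁻¹
      rw [mul_inv_cancel, ← zeo] at h
      exact eq_neg_of_add_eq_zero_right h.symm
    intro b
    have h := hx (x⁻¹ * b)
    rw [← mul_assoc, mul_inv_cancel, one_mul] at h
    have h2 : -x + b = x⁻¹ * b := by
      conv_lhs => rw [h]
      rw [neg_add_cancel_left]
    rw [← h2, hxinv]

@[simp] lemma mem_Kgrp {a : B} : a ∈ Kgrp B ↔ ∀ b, a * b = a + b := Iff.rfl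

/-- In a type with exactly two elements, any two elements different from a third are equal. -/
private lemma two_elt_aux {Q : Type*} [Fintype Q] [DecidableEq Q] (hQ : Fintype.card Q = 2)
    {z p q : Q} (hp : p ≠ z) (hq : q ≠ z) : p = q := by
  by_contra hpq
  have h3 : ({z, p, q} : Finset Q).card = 3 := by
    rw [Finset.card_insert_of_notMem (by simp [Ne.symm hp, Ne.symm hq]),
      Finset.card_insert_of_notMem (by simp [hpq]), Finset.card_singleton]
  have := Finset.card_le_card (Finset.subset_univ ({z, p, q} : Finset Q))
  rw [h3, Finset.card_univ, hQ] at this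
  omega

/-- Key lemma: if `a ∉ K` but `a³ ∈ K` (so λ_a has order 3), then the fixed
subgroup of λ_a cannot have index 2. -/
lemma fix_not_half [Fintype B] (hadd : ∀ x y : B, x + y = y + x)
    {a : B} (ha : a ∉ Kgrp B) (hcube : a * a * a ∈ Kgrp B)
    (hhalf : 2 * Nat.card (Sgrp a) = Nat.card B) : False := by
  classical
  letI : AddCommGroup B := { (inferInstance : AddGroup B) with add_comm := hadd }
  set F := Sgrp a with hF
  set σ : B → B := fun b => -a + a * b with hσ
  have hfix : ∀ b, b ∈ F ↔ σ b = b := by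
    intro b
    constructor
    · intro hb
      have : a * b = a + b := hb
      simp [hσ, this, neg_add_cancel_left]
    · intro hb
      have : a * b = a + b := by
        have := congrArg (fun z => a + z) hb
        simpa [hσ, add_neg_cancel_left] using this
      exact this
  have hσ3 : ∀ b, σ (σ (σ b)) = b := by
    intro b
    have h1 : σ (σ b) = -(a * a) + (a * a) * b := (lambda_mul a a b).symm
    have h2 : σ (σ (σ b)) = σ (-(a*a) + (a*a) * b) := by rw [h1]
    rw [h2]
    have h3 : σ (-(a*a) + (a*a) * b) = -(a * (a*a)) + (a * (a*a)) * b := by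
      have := lambda_mul a (a*a) b
      simpa [hσ] using this.symm
    rw [h3]
    have hc : ∀ c, (a * a * a) * c = (a * a * a) + c := hcube
    have : (a * (a * a)) * b = (a * (a*a)) + b := by
      rw [← mul_assoc]; exact hc b
    rw [this, neg_add_cancel_left]
  -- index of F is 2
  have hFpos : 0 < Nat.card F := Nat.card_pos
  have hidx : F.index = 2 := by
    have h1 := F.card_mul_index
    have h2 : Nat.card F * F.index = Nat.card F * 2 := by
      calc Nat.card F * F.index = Nat.card B := h1
        _ = 2 * Nat.card F := hhalf.symm
        _ = Nat.card F * 2 := Nat.mul_comm _ _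
    exact Nat.eq_of_mul_eq_mul_left hFpos h2
  have hQ2 : Nat.card (B ⧸ F) = 2 := by rw [← AddSubgroup.index_eq_card, hidx]
  -- pick x ∉ F
  obtain ⟨x, hx⟩ : ∃ x, x ∉ F := by
    by_contra hc
    push_neg at hc
    have htop : F = ⊤ := (AddSubgroup.eq_top_iff' F).mpr hc
    rw [htop, AddSubgroup.card_top] at hhalf
    have : 0 < Nat.card B := Nat.card_pos
    omega
  have hσx_ne : σ x ≠ x := fun hxx => hx ((hfix x).mpr hxx)
  have hσxF : σ x ∉ F := by
    intro hmem
    have h1 : σ (σ x) = σ x := (hfix _).mp hmem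
    have := hσ3 x
    rw [h1, h1] at this
    exact hσx_ne this
  -- quotient facts
  have hx0 : (QuotientAddGroup.mk x : B ⧸ F) ≠ 0 := by
    rw [Ne, QuotientAddGroup.eq_zero_iff]; exact hx
  have hsx0 : (QuotientAddGroup.mk (σ x) : B ⧸ F) ≠ 0 := by
    rw [Ne, QuotientAddGroup.eq_zero_iff]; exact hσxF
  have _ : Fintype (B ⧸ F) := Fintype.ofFinite _
  have heq : (QuotientAddGroup.mk x : B ⧸ F) = QuotientAddGroup.mk (σ x) := by
    apply two_elt_aux (by rw [← Nat.card_eq_fintype_card]; exact hQ2) hx0 hsx0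
  have ht : -x + σ x ∈ F := QuotientAddGroup.eq.mp heq
  set t := -x + σ x with htdef
  have hσxt : σ x = x + t := by rw [htdef, add_neg_cancel_left]
  have h2q : ∀ q : B ⧸ F, q + q = 0 := by
    intro q
    have := card_nsmul_eq_zero' (x := q)
    rwa [hQ2, two_nsmul] at this
  have hxx : x + x ∈ F := by
    have : (QuotientAddGroup.mk (x + x) : B ⧸ F) = 0 := by
      rw [QuotientAddGroup.mk_add]
      exact h2q _
    exact (QuotientAddGroup.eq_zero_iff _).mp this
  have hσadd : ∀ u v, σ (u + v) = σ u + σ v := fun u v => lambda_add a u v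
  have htt : t + t = 0 := by
    have h1 : σ (x + x) = x + x := (hfix _).mp hxx
    rw [hσadd, hσxt] at h1
    -- x + t + (x + t) = x + x
    have : (x + x) + (t + t) = (x + x) + 0 := by
      rw [add_zero]
      conv_rhs => rw [← h1]
      abel
    exact add_left_cancel this
  have hσt : σ t = t := (hfix t).mp ht
  have hσ2x : σ (σ x) = x := by
    rw [hσxt, hσadd x t, hσt, hσxt, add_assoc, htt, add_zero]
  have := hσ3 x
  rw [hσ2x] at this
  exact hσx_ne this


variable {B : Type*} [AddGroup B] [Group B] [SkewBrace B]

lemma star_eq {a b : B} (h : -a + a * b + -b = 0) : a * b = a + b := by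
  have h1 : -a + a * b = b := by
    have := congrArg (fun z => z + b) h
    simpa [add_assoc] using this
  have := congrArg (fun z => a + z) h1
  simpa [add_assoc] using this

lemma addcom_of {a b : B} (h : a + b + -a + -b = 0) : a + b = b + a := by
  have h1 : a + b + -a = b := by
    have := congrArg (fun z => z + b) h
    simpa [add_assoc] using this
  have := congrArg (fun z => z + a) h1
  simpa [add_assoc] using this

/-- In the doubly-abelian case, the Pb condition reduces to `a*b = a+b`. -/
lemma cond_iff (hadd : ∀ x y : B, x + y = y + x) (hmul : ∀ x y : B, x * y = y * x)
    (a b : B) :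
    ((-a + a * b + -b = 0) ∧ (-b + b * a + -a = 0) ∧ (a + b + -a + -b = 0)) ↔
      a * b = a + b := by
  constructor
  · rintro ⟨h1, -, -⟩
    exact star_eq h1
  · intro h
    refine ⟨?_, ?_, ?_⟩
    · rw [h, neg_add_cancel_left, add_neg_cancel]
    · rw [hmul b a, h, hadd a b, neg_add_cancel_left, add_neg_cancel]
    · rw [hadd a b, add_neg_cancel_right, add_neg_cancel]

/-- The main counting result in the doubly-abelian case. -/
lemma abelian_case [Fintype B] (hadd : ∀ x y : B, x + y = y + x)
    (hmul : ∀ x y : B, x * y = y * x) :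
    Nat.card {p : B × B // p.1 * p.2 = p.1 + p.2} = Nat.card B ^ 2 ∨
    4 * Nat.card {p : B × B // p.1 * p.2 = p.1 + p.2} = 3 * Nat.card B ^ 2 ∨
    8 * Nat.card {p : B × B // p.1 * p.2 = p.1 + p.2} ≤ 5 * Nat.card B ^ 2 := by
  classical
  set n := Nat.card B with hn
  have hnpos : 0 < n := Nat.card_pos
  set K := Kgrp B with hK
  set k := Nat.card K with hk
  have hkpos : 0 < k := Nat.card_pos
  have hkn : k * K.index = n := K.card_mul_index
  have hidx0 : K.index ≠ 0 := Subgroup.index_ne_zero_of_finite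
  have hfS : ∀ a : B, Nat.card {b // a * b = a + b} = Nat.card (Sgrp a) :=
    fun a => Nat.card_congr (Equiv.subtypeEquivRight fun b => Iff.rfl)
  have hf_le : ∀ a : B, Nat.card {b // a * b = a + b} ≤ n := fun a =>
    Nat.card_le_card_of_injective (fun x => x.1) (fun x y hxy => Subtype.ext hxy)
  have hKS : ∀ a : B, ∀ x : B, x ∈ K → x ∈ Sgrp a := by
    intro a x hx
    have h1 : x * a = x + a := hx a
    show a * x = a + x
    rw [hmul a x, h1, hadd x a]
  have hkf : ∀ a : B, k ≤ Nat.card (Sgrp a) := fun a =>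
    Nat.card_le_card_of_injective
      (fun y : K => (⟨y.1, hKS a y.1 y.2⟩ : Sgrp a))
      (fun y z hyz => by
        apply Subtype.ext
        have := congrArg Subtype.val hyz
        simpa using this)
  have hS_ne_top : ∀ a : B, a ∉ K → Sgrp a ≠ ⊤ := by
    intro a ha htop
    apply ha
    rw [hK]
    rw [mem_Kgrp]
    intro b
    have hb : b ∈ Sgrp a := by rw [htop]; exact AddSubgroup.mem_top b
    exact hb
  have hf_half : ∀ a : B, a ∉ K → 2 * Nat.card (Sgrp a) ≤ n :=
    fun a ha => half_card_add (hS_ne_top a ha)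
  have hcount := count_pairs (fun a b : B => a * b = a + b)
  rw [hcount]
  have hsplit := Finset.sum_filter_add_sum_filter_not Finset.univ (fun a => a ∈ K)
    (fun a => Nat.card {b // a * b = a + b})
  set S1 := ∑ a ∈ Finset.univ.filter (fun a => a ∈ K), Nat.card {b // a * b = a + b} with hS1
  set S2 := ∑ a ∈ Finset.univ.filter (fun a => ¬ a ∈ K), Nat.card {b // a * b = a + b} with hS2
  have hcards : (Finset.univ.filter (fun a => a ∈ K)).card = k := by
    rw [hk, Nat.card_eq_fintype_card, Fintype.card_subtype]
  have hcards2 : (Finset.univ.filter (fun a => ¬ a ∈ K)).card = n - k := by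
    have := Finset.card_filter_add_card_filter_not (s := Finset.univ)
      (p := fun a => a ∈ K)
    rw [hcards] at this
    rw [Finset.card_univ, ← Nat.card_eq_fintype_card, ← hn] at this
    omega
  have hkln : k ≤ n := by
    calc k = k * 1 := (Nat.mul_one k).symm
      _ ≤ k * K.index := Nat.mul_le_mul_left _ (Nat.one_le_iff_ne_zero.mpr hidx0)
      _ = n := hkn
  have hS1eq : S1 = k * n := by
    rw [hS1]
    rw [Finset.sum_congr rfl (fun a ha => ?_), Finset.sum_const, hcards, smul_eq_mul]
    have haK : a ∈ K := by simpa using (Finset.mem_filter.mp ha).2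
    have : ∀ b : B, a * b = a + b := haK
    rw [hn]
    exact Nat.card_congr (Equiv.subtypeUnivEquiv this)
  have hQuot : ∀ a : B, a ∉ K → 2 * Nat.card (Sgrp a) = n → K.index = 3 → False := by
    intro a ha hhalf hidx3
    letI : CommGroup B := { (inferInstance : Group B) with mul_comm := hmul }
    have hQ3 : Nat.card (B ⧸ K) = 3 := by rw [← Subgroup.index_eq_card, hidx3]
    have hpow : ((a : B ⧸ K)) ^ 3 = 1 := by
      have := pow_card_eq_one' (x := (a : B ⧸ K))
      rwa [hQ3] at this
    have hcube : a ^ 3 ∈ K := by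
      rw [← QuotientGroup.eq_one_iff]
      rw [← hpow]
      rfl
    have hcube' : a * a * a ∈ K := by
      have : a ^ 3 = a * a * a := by rw [pow_succ, pow_two]
      rwa [this] at hcube
    exact fix_not_half hadd (by exact ha) (by exact hcube') hhalf
  have hidxcases : K.index = 1 ∨ K.index = 2 ∨ K.index = 3 ∨ 4 ≤ K.index := by omega
  rcases hidxcases with h1 | h2 | h3 | h4
  · -- index 1 : K = ⊤, everything commutes
    left
    have hKtop : K = ⊤ := Subgroup.index_eq_one.mp h1
    have hall : ∀ a : B, Nat.card {b // a * b = a + b} = n := by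
      intro a
      have haK : a ∈ K := hKtop ▸ Subgroup.mem_top a
      have : ∀ b : B, a * b = a + b := haK
      rw [hn]
      exact Nat.card_congr (Equiv.subtypeUnivEquiv this)
    rw [← hsplit, hS1eq]
    have hS2eq : S2 = (n - k) * n := by
      rw [hS2, Finset.sum_congr rfl (fun a _ => hall a), Finset.sum_const, hcards2, smul_eq_mul]
    rw [hS2eq]
    have : k = n := by rw [h1, Nat.mul_one] at hkn; exact hkn
    rw [this]
    have h0 : n - n = 0 := by omega
    rw [h0, pow_two]
    ring
  · -- index 2
    right; left
    have hn2 : n = 2 * k := by rw [h2] at hkn; omega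
    have hfk : ∀ a : B, a ∉ K → Nat.card {b // a * b = a + b} = k := by
      intro a ha
      rw [hfS a]
      have h1 := hkf a
      have h2 := hf_half a ha
      omega
    have hS2eq : S2 = (n - k) * k := by
      rw [hS2, Finset.sum_congr rfl (fun a ha => hfk a (by simpa using (Finset.mem_filter.mp ha).2)),
        Finset.sum_const, hcards2, smul_eq_mul]
    rw [← hsplit, hS1eq, hS2eq, hn2]
    have : 2 * k - k = k := by omega
    rw [this, pow_two]
    ring
  · -- index 3
    right; right
    have hn3 : n = 3 * k := by rw [h3] at hkn; omega
    have hf3 : ∀ a : B, a ∉ K → 3 * Nat.card {b // a * b = a + b} ≤ n := by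
      intro a ha
      rw [hfS a]
      set f := Nat.card (Sgrp a) with hfdef
      have hfpos : 0 < f := Nat.card_pos
      obtain ⟨m, hm⟩ := (Sgrp a).card_addSubgroup_dvd_card
      have hne : f ≠ n := by
        intro hfn
        exact hS_ne_top a ha ((Sgrp a).eq_top_of_card_eq (by rw [← hfdef, hfn]))
      have hne2 : 2 * f ≠ n := fun hc => hQuot a ha (by rw [← hfdef]; exact hc) h3
      have hm' : n = f * m := by rw [hn, hm, ← hfdef]
      have hm3 : 3 ≤ m := by
        rcases m with - | m
        · omega
        · rcases m with - | m
          · rw [Nat.mul_one] at hm'; omega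
          · rcases m with - | m
            · omega
            · omega
      calc 3 * f = f * 3 := Nat.mul_comm _ _
        _ ≤ f * m := Nat.mul_le_mul_left _ hm3
        _ = n := hm'.symm
    have hS2b : 3 * S2 ≤ (n - k) * n := by
      rw [← hcards2, hS2, Finset.mul_sum]
      have := Finset.sum_le_card_nsmul (Finset.univ.filter (fun a => ¬ a ∈ K))
        (fun a => 3 * Nat.card {b // a * b = a + b}) n
        (fun a ha => hf3 a (by simpa using (Finset.mem_filter.mp ha).2))
      rw [smul_eq_mul] at this
      exact this
    rw [← hsplit]
    have key : 24 * (S1 + S2) ≤ 15 * n ^ 2 := by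
      have e1 : n - k = 2 * k := by omega
      rw [e1] at hS2b
      rw [hS1eq]
      nlinarith [hS2b, hn3, hkpos]
    omega
  · -- index ≥ 4
    right; right
    have h4k : 4 * k ≤ n := by
      calc 4 * k = k * 4 := Nat.mul_comm _ _
        _ ≤ k * K.index := Nat.mul_le_mul_left _ h4
        _ = n := hkn
    have hS2b : 2 * S2 ≤ (n - k) * n := by
      rw [← hcards2, hS2, Finset.mul_sum]
      have := Finset.sum_le_card_nsmul (Finset.univ.filter (fun a => ¬ a ∈ K))
        (fun a => 2 * Nat.card {b // a * b = a + b}) n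
        (fun a ha => by
          show 2 * Nat.card {b // a * b = a + b} ≤ n
          rw [hfS a]
          exact hf_half a (by simpa using (Finset.mem_filter.mp ha).2))
      rw [smul_eq_mul] at this
      exact this
    rw [← hsplit, hS1eq]
    have e1 : (n - k) * n + k * n = n * n := by
      rw [← Nat.add_mul]
      congr 1
      omega
    nlinarith [hS2b, h4k, hnpos]

end SBP

/-- For a finite skew brace, `Pb(B) = 1`, `Pb(B) = 3/4`, or `Pb(B) ≤ 5/8`;
in particular `3/4` is the only value in the open interval `(5/8, 1)`. -/
theorem stmt10 {B : Type*} [AddGroup B] [Group B] [SkewBrace B] [Finite B] :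
    (Pb B = 1 ∨ Pb B = 3 / 4 ∨ Pb B ≤ 5 / 8) ∧
    (Pb B ∈ Set.Ioo (5 / 8 : ℚ) 1 → Pb B = 3 / 4) := by
  classical
  have _inst := Fintype.ofFinite B
  set n := Nat.card B with hn
  have hnpos : 0 < n := Nat.card_pos
  set N := Nat.card {p : B × B //
      starOp p.1 p.2 = 0 ∧ starOp p.2 p.1 = 0 ∧ addComB p.1 p.2 = 0} with hNdef
  have hPb : Pb B = (N : ℚ) / (n : ℚ) ^ 2 := rfl
  have key : N = n ^ 2 ∨ 4 * N = 3 * n ^ 2 ∨ 8 * N ≤ 5 * n ^ 2 := by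
    by_cases hmul : ∀ x y : B, x * y = y * x
    · by_cases hadd : ∀ x y : B, x + y = y + x
      · -- doubly abelian case
        have hcond : ∀ p : B × B,
            (starOp p.1 p.2 = 0 ∧ starOp p.2 p.1 = 0 ∧ addComB p.1 p.2 = 0) ↔
              p.1 * p.2 = p.1 + p.2 := fun p => SBP.cond_iff hadd hmul p.1 p.2
        have hNe : N = Nat.card {p : B × B // p.1 * p.2 = p.1 + p.2} :=
          Nat.card_congr (Equiv.subtypeEquivRight hcond)
        rw [hNe]
        exact SBP.abelian_case hadd hmul
      · -- additive group nonabelian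
        right; right
        have h' : ¬ ∀ a b : Multiplicative B, a * b = b * a := by
          intro hcomm
          apply hadd
          intro x y
          have h := hcomm (Multiplicative.ofAdd x) (Multiplicative.ofAdd y)
          rw [← ofAdd_add, ← ofAdd_add] at h
          exact Multiplicative.ofAdd.injective h
        have hle : N ≤ Nat.card {p : Multiplicative B × Multiplicative B //
            p.1 * p.2 = p.2 * p.1} := by
          apply Nat.card_le_card_of_injective
            (fun q => (⟨(Multiplicative.ofAdd q.1.1, Multiplicative.ofAdd q.1.2), by
              rcases q.2 with ⟨-, -, h3⟩
              have hc : q.1.1 + q.1.2 = q.1.2 + q.1.1 := SBP.addcom_of h3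
              show Multiplicative.ofAdd q.1.1 * Multiplicative.ofAdd q.1.2 =
                Multiplicative.ofAdd q.1.2 * Multiplicative.ofAdd q.1.1
              rw [← ofAdd_add, ← ofAdd_add, hc]⟩ :
              {p : Multiplicative B × Multiplicative B // p.1 * p.2 = p.2 * p.1}))
          intro q r hqr
          apply Subtype.ext
          have h1 := congrArg (fun z : {p : Multiplicative B × Multiplicative B //
            p.1 * p.2 = p.2 * p.1} => Multiplicative.toAdd z.1.1) hqr
          have h2 := congrArg (fun z : {p : Multiplicative B × Multiplicative B //
            p.1 * p.2 = p.2 * p.1} => Multiplicative.toAdd z.1.2) hqr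
          simp only [toAdd_ofAdd] at h1 h2
          exact Prod.ext h1 h2
        have h58 := SBP.group58 (Multiplicative B) h'
        have hcard : Nat.card (Multiplicative B) = n := Nat.card_congr Multiplicative.toAdd
        calc 8 * N ≤ 8 * Nat.card {p : Multiplicative B × Multiplicative B //
              p.1 * p.2 = p.2 * p.1} := Nat.mul_le_mul_left _ hle
          _ ≤ 5 * Nat.card (Multiplicative B) ^ 2 := h58
          _ = 5 * n ^ 2 := by rw [hcard]
    · -- multiplicative group nonabelian
      right; right
      have hle : N ≤ Nat.card {p : B × B // p.1 * p.2 = p.2 * p.1} := by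
        apply Nat.card_le_card_of_injective
          (fun q => (⟨q.1, by
            rcases q.2 with ⟨h1, h2, h3⟩
            have e1 : q.1.1 * q.1.2 = q.1.1 + q.1.2 := SBP.star_eq h1
            have e2 : q.1.2 * q.1.1 = q.1.2 + q.1.1 := SBP.star_eq h2
            have e3 : q.1.1 + q.1.2 = q.1.2 + q.1.1 := SBP.addcom_of h3
            rw [e1, e2, e3]⟩ : {p : B × B // p.1 * p.2 = p.2 * p.1}))
        intro q r hqr
        apply Subtype.ext
        have := congrArg Subtype.val hqr
        simpa using this
      have h58 := SBP.group58 B hmul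
      calc 8 * N ≤ 8 * Nat.card {p : B × B // p.1 * p.2 = p.2 * p.1} :=
            Nat.mul_le_mul_left _ hle
        _ ≤ 5 * n ^ 2 := h58
  have hnq : (0 : ℚ) < (n : ℚ) ^ 2 := by positivity
  have tri : Pb B = 1 ∨ Pb B = 3 / 4 ∨ Pb B ≤ 5 / 8 := by
    rcases key with hc | hc | hc
    · left
      rw [hPb, div_eq_one_iff_eq hnq.ne']
      exact_mod_cast hc
    · right; left
      rw [hPb, div_eq_div_iff hnq.ne' (by norm_num : (4:ℚ) ≠ 0)]
      have : N * 4 = 3 * n ^ 2 := by rw [Nat.mul_comm]; exact hc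
      exact_mod_cast this
    · right; right
      rw [hPb, div_le_div_iff₀ hnq (by norm_num)]
      have : N * 8 ≤ 5 * n ^ 2 := by rw [Nat.mul_comm]; exact hc
      exact_mod_cast this
  refine ⟨tri, ?_⟩
  intro hIoo
  rcases tri with hc | hc | hc
  · exact absurd (hc ▸ hIoo.2) (lt_irrefl 1)
  · exact hc
  · exact absurd hIoo.1 (not_lt.mpr hc)
end

section
/- Let B be a finite skew left brace. Then Pb(B) = 3/4 if and only if [B : Ann(B)] = 2. -/
namespace Stmt11Aux

variable {B : Type*} [AddGroup B] [Group B] [SkewBrace B]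

/-- Shorthand for the "brace commuting" predicate. -/
def P (a b : B) : Prop := starOp a b = 0 ∧ starOp b a = 0 ∧ addComB a b = 0

lemma zo : (0 : B) = 1 := SkewBrace.zero_eq_one

lemma compat (a b c : B) : a * (b + c) = a * b + -a + a * c := SkewBrace.compat a b c

lemma star_eq_zero_iff {a b : B} : starOp a b = 0 ↔ a * b = a + b := by
  unfold starOp
  constructor
  · intro h
    have h1 : -a + a * b = b := add_neg_eq_zero.mp h
    calc a * b = a + (-a + a * b) := (add_neg_cancel_left a (a * b)).symm
      _ = a + b := by rw [h1]
  · intro h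
    rw [h]
    simp

lemma addCom_eq_zero_iff {a b : B} : addComB a b = 0 ↔ a + b = b + a := by
  unfold addComB
  constructor
  · intro h
    have h1 : a + b + -a = b := add_neg_eq_zero.mp h
    calc a + b = a + b + -a + a := (neg_add_cancel_right (a + b) a).symm
      _ = b + a := by rw [h1]
  · intro h
    rw [h]
    simp [add_assoc]

lemma P_iff {a b : B} : P a b ↔ a * b = a + b ∧ b * a = b + a ∧ a + b = b + a := by
  unfold P
  rw [star_eq_zero_iff, star_eq_zero_iff, addCom_eq_zero_iff]

lemma P_symm {a b : B} : P a b ↔ P b a := by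
  rw [P_iff, P_iff]
  constructor
  · rintro ⟨h1, h2, h3⟩; exact ⟨h2, h1, h3.symm⟩
  · rintro ⟨h1, h2, h3⟩; exact ⟨h2, h1, h3.symm⟩

lemma P_mul_comm {a b : B} (h : P a b) : a * b = b * a := by
  obtain ⟨h1, h2, h3⟩ := P_iff.mp h
  rw [h1, h2, h3]

lemma P_one (a : B) : P a 1 := by
  rw [P_iff]
  refine ⟨?_, ?_, ?_⟩
  · rw [mul_one, ← zo, add_zero]
  · rw [one_mul, ← zo, zero_add]
  · rw [← zo, add_zero, zero_add]

lemma P_mul {a b c : B} (hb : P a b) (hc : P a c) : P a (b * c) := by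
  obtain ⟨hb1, hb2, hb3⟩ := P_iff.mp hb
  obtain ⟨hc1, hc2, hc3⟩ := P_iff.mp hc
  have hab : a * b = b * a := by rw [hb1, hb2, hb3]
  have hac : a * c = c * a := by rw [hc1, hc2, hc3]
  have key1 : a * (b * c) = a + b * c := by
    calc a * (b * c) = (a * b) * c := (mul_assoc a b c).symm
      _ = (b * a) * c := by rw [hab]
      _ = b * (a * c) := mul_assoc b a c
      _ = b * (a + c) := by rw [hc1]
      _ = b * a + -b + b * c := compat b a c
      _ = (b + a) + -b + b * c := by rw [hb2]
      _ = (a + b) + -b + b * c := by rw [hb3]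
      _ = a + b * c := by rw [add_neg_cancel_right]
  have key2 : (b * c) * a = b * c + a := by
    calc (b * c) * a = b * (c * a) := mul_assoc b c a
      _ = b * (c + a) := by rw [hc2]
      _ = b * c + -b + b * a := compat b c a
      _ = b * c + -b + (b + a) := by rw [hb2]
      _ = b * c + (-b + (b + a)) := add_assoc _ _ _
      _ = b * c + a := by rw [neg_add_cancel_left]
  have key3 : a + b * c = b * c + a := by
    have : a * (b * c) = (b * c) * a := by
      calc a * (b * c) = (a * b) * c := (mul_assoc a b c).symm
        _ = (b * a) * c := by rw [hab]
        _ = b * (a * c) := mul_assoc b a c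
        _ = b * (c * a) := by rw [hac]
        _ = (b * c) * a := (mul_assoc b c a).symm
    rw [← key1, ← key2, this]
  exact P_iff.mpr ⟨key1, key2, key3⟩

lemma ann_P (x : B) {z : B} (hz : z ∈ AnnSet B) : P x z := by
  obtain ⟨h1, h2, h3⟩ := hz
  rw [P_iff]
  refine ⟨?_, (h1 x).symm, (h2 x).symm⟩
  rw [← h3 x, ← h1 x, ← h2 x]

lemma ann_forall {a : B} (ha : a ∈ AnnSet B) (b : B) : P a b :=
  P_symm.mp (ann_P b ha)

lemma forall_P_ann {a : B} (h : ∀ b, P a b) : a ∈ AnnSet B := by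
  refine ⟨fun b => ((P_iff.mp (h b)).1).symm, fun b => (P_iff.mp (h b)).2.2,
    fun b => P_mul_comm (h b)⟩

lemma ann_one_mem : (1 : B) ∈ AnnSet B := by
  refine ⟨fun b => ?_, fun b => ?_, fun b => ?_⟩
  · rw [one_mul, ← zo, zero_add]
  · rw [← zo, zero_add, add_zero]
  · rw [one_mul, mul_one]

lemma ann_mul_mem {a b : B} (ha : a ∈ AnnSet B) (hb : b ∈ AnnSet B) :
    a * b ∈ AnnSet B := by
  obtain ⟨ha1, ha2, ha3⟩ := ha
  obtain ⟨hb1, hb2, hb3⟩ := hb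
  have hab : a * b = a + b := (ha1 b).symm
  refine ⟨fun c => ?_, fun c => ?_, fun c => ?_⟩
  · have h : a * b * c = a + (b + c) := by
      rw [mul_assoc, ← hb1 c, ← ha1 (b + c)]
    rw [h, hab, add_assoc]
  · rw [hab]
    calc a + b + c = a + (c + b) := by rw [add_assoc, hb2 c]
      _ = (a + c) + b := (add_assoc _ _ _).symm
      _ = (c + a) + b := by rw [ha2 c]
      _ = c + (a + b) := add_assoc _ _ _
  · rw [mul_assoc, hb3 c, ← mul_assoc, ha3 c, mul_assoc]

/-- The set `{b | P a b}` as a submonoid. -/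
def cbM (a : B) : Submonoid B where
  carrier := {b | P a b}
  one_mem' := P_one a
  mul_mem' := fun hb hc => P_mul hb hc

/-- The annihilator as a submonoid. -/
def annM (B : Type*) [AddGroup B] [Group B] [SkewBrace B] : Submonoid B where
  carrier := AnnSet B
  one_mem' := ann_one_mem
  mul_mem' := fun ha hb => ann_mul_mem ha hb

lemma inv_mem_of_finite [Finite B] (S : Submonoid B) {b : B} (h : b ∈ S) : b⁻¹ ∈ S := by
  have hpos : 0 < orderOf b := orderOf_pos b
  have h1 : b ^ (orderOf b - 1) * b = 1 := by
    rw [← pow_succ, Nat.sub_add_cancel hpos, pow_orderOf_eq_one]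
  have h2 : b⁻¹ = b ^ (orderOf b - 1) := (eq_inv_of_mul_eq_one_left h1).symm
  rw [h2]
  exact pow_mem h _

/-- The brace centralizer as a subgroup (of the multiplicative group). -/
def cbSubgroup [Finite B] (a : B) : Subgroup B :=
  { cbM a with inv_mem' := fun h => inv_mem_of_finite (cbM a) h }

/-- The annihilator as a subgroup (of the multiplicative group). -/
def annSubgroup (B : Type*) [AddGroup B] [Group B] [SkewBrace B] [Finite B] : Subgroup B :=
  { annM B with inv_mem' := fun h => inv_mem_of_finite (annM B) h }

section Counting

variable [Fintype B]

lemma card_pairs_eq_sum :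
    Nat.card {p : B × B // P p.1 p.2} = ∑ a : B, Nat.card {b : B // P a b} := by
  classical
  refine (Nat.card_congr (Equiv.subtypeProdEquivSigmaSubtype fun a b : B => P a b)).trans ?_
  rw [Nat.card_eq_fintype_card, Fintype.card_sigma]
  exact Finset.sum_congr rfl fun a _ => Nat.card_eq_fintype_card.symm

lemma card_cb_of_ann {a : B} (ha : a ∈ AnnSet B) :
    Nat.card {b : B // P a b} = Nat.card B :=
  Nat.card_congr (Equiv.subtypeUnivEquiv (ann_forall ha))

lemma card_ann_le_card_cb (a : B) :
    Nat.card (AnnSet B) ≤ Nat.card {b : B // P a b} := by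
  have hsub : AnnSet B ⊆ {b : B | P a b} := fun z hz => ann_P a hz
  exact Nat.card_le_card_of_injective (Set.inclusion hsub) (Set.inclusion_injective hsub)

lemma card_cb_dvd (a : B) : Nat.card {b : B // P a b} ∣ Nat.card B :=
  Subgroup.card_subgroup_dvd_card (cbSubgroup a)

lemma two_mul_card_cb_le {a : B} (ha : a ∉ AnnSet B) :
    2 * Nat.card {b : B // P a b} ≤ Nat.card B := by
  have hd := card_cb_dvd a
  have hn : 0 < Nat.card B := Nat.card_pos
  have hne : Nat.card {b : B // P a b} ≠ Nat.card B := by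
    intro h
    have htop : cbSubgroup a = ⊤ := Subgroup.eq_top_of_card_eq _ h
    exact ha (forall_P_ann fun b => by
      have : b ∈ cbSubgroup a := htop ▸ Subgroup.mem_top b
      exact this)
  obtain ⟨t, ht⟩ := hd
  rcases t with _ | _ | t
  · omega
  · omega
  · nlinarith [ht]

lemma card_ann_le : Nat.card (AnnSet B) ≤ Nat.card B :=
  Nat.card_le_card_of_injective (Subtype.val : AnnSet B → B) Subtype.val_injective

lemma card_ann_dvd : Nat.card (AnnSet B) ∣ Nat.card B :=
  Subgroup.card_subgroup_dvd_card (annSubgroup B)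

lemma card_ann_subgroup : Nat.card (annSubgroup B) = Nat.card (AnnSet B) := rfl

lemma card_ann_pos : 0 < Nat.card (AnnSet B) :=
  @Nat.card_pos _ ⟨⟨1, ann_one_mem⟩⟩ _

end Counting

end Stmt11Aux

open Stmt11Aux in
/-- `Pb(B) = 3/4` if and only if `[B : Ann(B)] = 2`. -/
theorem stmt11 {B : Type*} [AddGroup B] [Group B] [SkewBrace B] [Finite B] :
    Pb B = 3 / 4 ↔ Nat.card B = 2 * Nat.card (AnnSet B) := by
  classical
  letI : Fintype B := Fintype.ofFinite B
  set n := Nat.card B with hn_def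
  set m := Nat.card (AnnSet B) with hm_def
  have hn : 0 < n := Nat.card_pos
  have hm0 : 0 < m := card_ann_pos
  have hmn : m ≤ n := card_ann_le
  have hPb_eq : Pb B = (Nat.card {p : B × B // P p.1 p.2} : ℚ) / (n : ℚ) ^ 2 := rfl
  set N := Nat.card {p : B × B // P p.1 p.2} with hN_def
  have hNsum : N = ∑ a : B, Nat.card {b : B // P a b} := card_pairs_eq_sum
  set F : Finset B := Finset.univ.filter (fun a => a ∈ AnnSet B) with hF_def
  set Fc : Finset B := Finset.univ.filter (fun a => a ∉ AnnSet B) with hFc_def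
  have hFcard : F.card = m := by
    rw [hF_def, ← Fintype.card_subtype, hm_def, Nat.card_eq_fintype_card]
  have hsplit : (∑ a : B, Nat.card {b : B // P a b}) =
      (∑ a ∈ F, Nat.card {b : B // P a b}) +
      (∑ a ∈ Fc, Nat.card {b : B // P a b}) := by
    rw [hF_def, hFc_def]
    exact (Finset.sum_filter_add_sum_filter_not Finset.univ _ _).symm
  have hFccard : Fc.card = n - m := by
    have h1 := Finset.card_filter_add_card_filter_not
      (s := (Finset.univ : Finset B)) (p := fun a : B => a ∈ AnnSet B)
    rw [← hF_def, ← hFc_def] at h1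
    have hcu : (Finset.univ : Finset B).card = n := by
      rw [hn_def, Nat.card_eq_fintype_card, Finset.card_univ]
    omega
  have hsumF : (∑ a ∈ F, Nat.card {b : B // P a b}) = m * n := by
    rw [Finset.sum_congr rfl (fun a ha => card_cb_of_ann (Finset.mem_filter.mp ha).2),
      Finset.sum_const, hFcard, smul_eq_mul]
  constructor
  · intro hPb
    rw [hPb_eq] at hPb
    have hnQ : (n : ℚ) ≠ 0 := Nat.cast_ne_zero.mpr hn.ne'
    rw [div_eq_div_iff (pow_ne_zero 2 hnQ) (by norm_num : (4 : ℚ) ≠ 0)] at hPb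
    have h4N : 4 * N = 3 * n ^ 2 := by
      have h1 : (N : ℚ) * 4 = 3 * (n : ℚ) ^ 2 := hPb
      have h2 : ((N * 4 : ℕ) : ℚ) = ((3 * n ^ 2 : ℕ) : ℚ) := by push_cast; linarith
      have h3 : N * 4 = 3 * n ^ 2 := Nat.cast_injective h2
      linarith
    -- n ≠ m
    have hne : n ≠ m := by
      intro h
      have hcard : Nat.card (annSubgroup B) = m := card_ann_subgroup
      have htop : annSubgroup B = ⊤ :=
        Subgroup.eq_top_of_card_eq _ (by rw [hcard, ← hn_def]; omega)
      have hall : ∀ a : B, a ∈ AnnSet B := fun a => by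
        have h2 : a ∈ annSubgroup B := htop ▸ Subgroup.mem_top a
        exact h2
      have hth : N = ∑ _a : B, Nat.card B := by
        rw [hNsum]
        exact Finset.sum_congr rfl fun a _ => card_cb_of_ann (hall a)
      have hnn : N = n * n := by
        rw [hth, Finset.sum_const, Finset.card_univ, smul_eq_mul,
          ← Nat.card_eq_fintype_card, ← hn_def]
      nlinarith [h4N, hnn, hn, sq n]
    -- bound on the non-annihilator part of the sum
    have hsumFc : (∑ a ∈ Fc, 2 * Nat.card {b : B // P a b}) ≤ (n - m) * n := by
      calc (∑ a ∈ Fc, 2 * Nat.card {b : B // P a b})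
          ≤ ∑ _a ∈ Fc, n := Finset.sum_le_sum (fun a ha => by
            have h2 := two_mul_card_cb_le (B := B) (a := a)
              (by rw [hFc_def] at ha; exact (Finset.mem_filter.mp ha).2)
            rw [← hn_def] at h2
            exact h2)
        _ = (n - m) * n := by rw [Finset.sum_const, hFccard, smul_eq_mul]
    have hbound : 2 * N ≤ 2 * (m * n) + (n - m) * n := by
      have h1 : 2 * (∑ a ∈ Fc, Nat.card {b : B // P a b}) ≤ (n - m) * n := by
        rw [Finset.mul_sum]; exact hsumFc
      calc 2 * N = 2 * (∑ a ∈ F, Nat.card {b : B // P a b})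
            + 2 * (∑ a ∈ Fc, Nat.card {b : B // P a b}) := by
              rw [hNsum, hsplit]; ring
        _ = 2 * (m * n) + 2 * (∑ a ∈ Fc, Nat.card {b : B // P a b}) := by rw [hsumF]
        _ ≤ 2 * (m * n) + (n - m) * n := Nat.add_le_add_left h1 _
    have hle2m : n ≤ 2 * m := by
      have hk : n - m + m = n := Nat.sub_add_cancel hmn
      have h1 : 3 * n * n ≤ (2 * m + 2 * n) * n := by nlinarith [hbound, h4N, hk, sq n]
      have h2 : 3 * n ≤ 2 * m + 2 * n := Nat.le_of_mul_le_mul_right h1 hn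
      omega
    obtain ⟨t, ht⟩ := (card_ann_dvd : m ∣ n)
    rw [← hn_def, ← hm_def] at ht
    rcases t with _ | _ | t
    · simp at ht; omega
    · simp at ht; omega
    · have h2 : m * (t + 1 + 1) ≤ 2 * m := ht ▸ hle2m
      have h4 : m * t = 0 := by nlinarith [h2]
      rcases Nat.mul_eq_zero.mp h4 with h | h
      · omega
      · subst h
        rw [ht]; ring
  · intro h
    have hcFc : ∀ a ∈ Fc, Nat.card {b : B // P a b} = m := by
      intro a ha
      have h2 := two_mul_card_cb_le (B := B) (a := a)
        (by rw [hFc_def] at ha; exact (Finset.mem_filter.mp ha).2)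
      have h1 := card_ann_le_card_cb (B := B) a
      rw [← hm_def] at h1
      rw [← hn_def] at h2
      omega
    have hNval : N = 3 * (m * m) := by
      have hcongr : (∑ a ∈ Fc, Nat.card {b : B // P a b}) = (n - m) * m := by
        rw [Finset.sum_congr rfl hcFc, Finset.sum_const, hFccard, smul_eq_mul]
      rw [hNsum, hsplit, hsumF, hcongr, h]
      have h2 : 2 * m - m = m := by omega
      rw [h2]; ring
    rw [hPb_eq, hNval, h]
    have h2m : ((2 * m : ℕ) : ℚ) ≠ 0 := Nat.cast_ne_zero.mpr (by omega)
    rw [div_eq_div_iff (pow_ne_zero 2 h2m) (by norm_num : (4 : ℚ) ≠ 0)]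
    push_cast
    ring
end
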